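/- arXiv:math/9911100 — 3 statements merged into one kernel-verified Lean document; each statement's English description precedes it below -/
import Mathlib

section
/- For every nonzero pure imaginary octonion l, the kernel of the bilinear form (a,b) ↦ λ(l,a,b) on Im(𝕆) is exactly the one-dimensional span of l, where λ(a,b,c) = ([a,b],c). -/
noncomputable section

/-- The octonions, realized via the Cayley–Dickson construction as pairs of quaternions. -/
abbrev Octo : Type := Quaternion ℝ × Quaternion ℝ

namespace Octo

/-- Octonion multiplication (Cayley–Dickson): `(a,b)(c,d) = (ac - d̄b, da + bc̄)`. -/
def omul (x y : Octo) : Octo :=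
  (x.1 * y.1 - star y.2 * x.2, y.2 * x.1 + x.2 * star y.1)

/-- The octonion unit. -/
def oone : Octo := (1, 0)

/-- Octonion conjugation. -/
def oconj (x : Octo) : Octo := (star x.1, -x.2)

/-- Real part of an octonion. -/
def ore (x : Octo) : ℝ := x.1.re

/-- The standard inner product `(x,y) = re (x * ȳ)`. -/
def oinner (x y : Octo) : ℝ := ore (omul x (oconj y))

/-- An octonion is pure imaginary if `x̄ = -x`. -/
def IsIm (x : Octo) : Prop := oconj x = -x

/-- The commutator `[a,b] = a*b - b*a`. -/
def comm (a b : Octo) : Octo := omul a b - omul b a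

/-- The octonionic vector (cross) product on imaginary octonions: half the commutator. -/
def cross (a b : Octo) : Octo := (1/2 : ℝ) • comm a b

/-- The 3-form `λ(a,b,c) = ([a,b],c)`. -/
def lam (a b c : Octo) : ℝ := oinner (comm a b) c

end Octo

/-!
If `λ(l, a, ·)` vanishes on `Im 𝕆`, then testing it against the imaginary octonion `[l, a]` gives
`|[l, a]|² = 0`, so `a` commutes with `l`. For imaginary `l`, `a` the double commutator satisfies
`[l, [l, a]] = 4 (a, l) l - 4 |l|² a`, so `[l, a] = 0` forces `a = ((a, l) / |l|²) l`.
Conversely `[l, t l] = 0`.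
-/

namespace Octo

lemma isIm_iff_re_eq_zero (x : Octo) : IsIm x ↔ x.1.re = 0 := by
  rw [IsIm, oconj, Prod.ext_iff, Quaternion.ext_iff]
  simp only [Prod.fst_neg, Prod.snd_neg, Quaternion.re_star, Quaternion.imI_star,
    Quaternion.imJ_star, Quaternion.imK_star, Quaternion.re_neg, Quaternion.imI_neg,
    Quaternion.imJ_neg, Quaternion.imK_neg, and_true]
  constructor
  · intro h
    linarith
  · intro h
    simp [h]

lemma oinner_self (x : Octo) : oinner x x = Quaternion.normSq x.1 + Quaternion.normSq x.2 := by
  simp [oinner, ore, omul, oconj, Quaternion.self_mul_star, Quaternion.star_mul_self]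

lemma oinner_self_eq_zero {x : Octo} : oinner x x = 0 ↔ x = 0 := by
  rw [oinner_self, add_eq_zero_iff_of_nonneg Quaternion.normSq_nonneg Quaternion.normSq_nonneg,
    Quaternion.normSq_eq_zero, Quaternion.normSq_eq_zero, Prod.ext_iff]
  rfl

lemma comm_smul_self (l : Octo) (t : ℝ) : comm l (t • l) = 0 := by
  ext <;> simp [comm, omul]

lemma lam_smul_self (l : Octo) (t : ℝ) (b : Octo) : lam l (t • l) b = 0 := by
  simp [lam, comm_smul_self, oinner, omul, ore, Quaternion.re_zero]

lemma comm_zero (l : Octo) : comm l 0 = 0 := by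
  ext <;> simp [comm, omul]

lemma isIm_comm (x y : Octo) : IsIm (comm x y) := by
  rw [isIm_iff_re_eq_zero]
  simp only [comm, omul, Prod.mk_sub_mk, Quaternion.re_sub, Quaternion.re_mul,
    Quaternion.re_star, Quaternion.imI_star, Quaternion.imJ_star, Quaternion.imK_star, neg_mul,
    sub_neg_eq_add]
  ring

/- On `Im 𝕆` alternativity gives `l * (l * a) = l² * a = -|l|² a` and `l * a + a * l = -2 (a,l)`;
the identity is checked here in quaternion coordinates. -/
lemma comm_comm_self {l a : Octo} (hl : IsIm l) (ha : IsIm a) :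
    comm l (comm l a) = (4 * oinner a l) • l - (4 * oinner l l) • a := by
  rw [isIm_iff_re_eq_zero] at hl ha
  obtain ⟨l1, l2⟩ := l
  obtain ⟨a1, a2⟩ := a
  dsimp only at hl ha
  simp only [comm, omul, oconj, oinner, ore]
  ext <;>
    simp only [Quaternion.re_mul, Quaternion.imI_mul, Quaternion.imJ_mul, Quaternion.imK_mul,
      Quaternion.re_sub, Quaternion.imI_sub, Quaternion.imJ_sub, Quaternion.imK_sub,
      Quaternion.re_add, Quaternion.imI_add, Quaternion.imJ_add, Quaternion.imK_add,
      Quaternion.re_neg, Quaternion.imI_neg, Quaternion.imJ_neg, Quaternion.imK_neg,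
      Quaternion.re_star, Quaternion.imI_star, Quaternion.imJ_star, Quaternion.imK_star,
      Quaternion.re_smul, Quaternion.imI_smul, Quaternion.imJ_smul, Quaternion.imK_smul,
      Prod.fst_sub, Prod.snd_sub, Prod.smul_fst, Prod.smul_snd,
      smul_eq_mul, hl, ha] <;> ring

lemma exists_eq_smul_of_comm_eq_zero {l a : Octo} (hl : IsIm l) (hl0 : l ≠ 0) (ha : IsIm a)
    (h : comm l a = 0) : ∃ t : ℝ, a = t • l := by
  have hll : 4 * oinner l l ≠ 0 := mul_ne_zero four_ne_zero (mt oinner_self_eq_zero.1 hl0)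
  have hline := comm_comm_self hl ha
  rw [h, comm_zero, eq_comm, sub_eq_zero] at hline
  refine ⟨(4 * oinner l l)⁻¹ * (4 * oinner a l), ?_⟩
  rw [mul_smul, hline, smul_smul, inv_mul_cancel₀ hll, one_smul]

end Octo

open Octo in
/-- For a nonzero imaginary octonion `l`, the kernel of `(a,b) ↦ λ(l,a,b)` on `Im 𝕆`
is exactly the line spanned by `l`. -/
theorem kernel_of_lambda_contraction (l : Octo) (hl : IsIm l) (hl0 : l ≠ 0)
    (a : Octo) (ha : IsIm a) :
    (∀ b : Octo, IsIm b → lam l a b = 0) ↔ ∃ t : ℝ, a = t • l := by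
  constructor
  · intro h
    exact exists_eq_smul_of_comm_eq_zero hl hl0 ha
      (oinner_self_eq_zero.1 (h (comm l a) (isIm_comm l a)))
  · rintro ⟨t, rfl⟩ b -
    exact lam_smul_self l t b

end
end

section
/- There exists a 4-dimensional subspace L of Im(𝕆) on which the 3-form λ(a,b,c) = ([a,b],c) vanishes identically (e.g., L = span{i, j, l, [k,l]/2} for suitable orthonormal imaginary octonions with k the vector product of i and j). -/
noncomputable section

namespace Octo

/-!
In the Cayley–Dickson model `𝕆 = ℍ ⊕ ℍ`, the second summand `0 ⊕ ℍ` is purely imaginary, the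
product of two of its elements lies in the first summand `ℍ ⊕ 0`, and the two summands are
orthogonal. Hence `[a, b] ⊥ c` for all `a, b, c ∈ 0 ⊕ ℍ`, a 4-dimensional subspace: it is the
coassociative complement of the associative subalgebra `ℍ`.
-/

theorem isIm_inr (q : Quaternion ℝ) : IsIm (0, q) := by
  simp [IsIm, oconj]

theorem omul_inr_inr (a b : Quaternion ℝ) : omul (0, a) (0, b) = (-(star b * a), 0) := by
  simp [omul]

theorem comm_inr_inr (a b : Quaternion ℝ) :
    comm (0, a) (0, b) = (star a * b - star b * a, 0) := by
  rw [comm, omul_inr_inr, omul_inr_inr, Prod.mk_sub_mk, sub_zero, sub_neg_eq_add, neg_add_eq_sub]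

theorem oinner_inl_inr (p q : Quaternion ℝ) : oinner (p, 0) (0, q) = 0 := by
  simp [oinner, omul, oconj, ore, Quaternion.re_zero]

theorem lam_inr (a b c : Quaternion ℝ) : lam (0, a) (0, b) (0, c) = 0 := by
  rw [lam, comm_inr_inr, oinner_inl_inr]

end Octo

open Octo in
/-- There exists a 4-dimensional subspace of `Im 𝕆` on which `λ(a,b,c) = ([a,b],c)`
vanishes identically. -/
theorem exists_isotropic_dim_four :
    ∃ L : Submodule ℝ Octo, (∀ x ∈ L, IsIm x) ∧ Module.finrank ℝ L = 4 ∧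
      ∀ a ∈ L, ∀ b ∈ L, ∀ c ∈ L, lam a b c = 0 := by
  refine ⟨LinearMap.range (LinearMap.inr ℝ (Quaternion ℝ) (Quaternion ℝ)), ?_, ?_, ?_⟩
  · rintro _ ⟨q, rfl⟩
    exact isIm_inr q
  · rw [LinearMap.finrank_range_of_inj LinearMap.inr_injective, Quaternion.finrank_eq_four]
  · rintro _ ⟨a, rfl⟩ _ ⟨b, rfl⟩ _ ⟨c, rfl⟩
    exact lam_inr a b c

end
end

section
/- Any ℝ-algebra automorphism of the octonions preserves the inner product, preserves the subspace Im(𝕆), and preserves the 3-form λ(a,b,c) = ([a,b],c) on Im(𝕆). -/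
/-!
Every octonion satisfies its characteristic equation `x² = 2 re(x) x - |x|² 1`. Applying an
automorphism `φ` and comparing with the same equation for `φ x` gives
`2 (re φx - re x) φx = (|φx|² - |x|²) 1`; since `φ` fixes `1` and is injective, this forces
`re φx = re x` and then `|φx| = |x|`. Polarization gives the inner product, `re` detects `Im(𝕆)`,
and `λ` is built from the product and the inner product.
-/

noncomputable section

namespace Octo

lemma omul_self (x : Octo) : omul x x = (2 * ore x) • x - oinner x x • oone := by
  obtain ⟨a, b⟩ := x
  simp only [omul, ore, oinner, oconj, oone, Prod.smul_mk, Prod.mk_sub_mk, smul_zero]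
  refine Prod.ext ?_ ?_ <;> ext <;>
    simp [Quaternion.re_mul, Quaternion.imI_mul, Quaternion.imJ_mul, Quaternion.imK_mul,
      Quaternion.re_one, Quaternion.imI_one, Quaternion.imJ_one, Quaternion.imK_one] <;> ring

lemma oinner_add_add_self (x y : Octo) :
    oinner (x + y) (x + y) = oinner x x + 2 * oinner x y + oinner y y := by
  obtain ⟨a, b⟩ := x
  obtain ⟨c, d⟩ := y
  simp [oinner, ore, omul, oconj, Quaternion.re_mul]
  ring

lemma isIm_iff_ore_eq_zero (x : Octo) : IsIm x ↔ ore x = 0 := by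
  obtain ⟨a, b⟩ := x
  simp only [IsIm, oconj, ore, Prod.neg_mk, Prod.ext_iff, and_true]
  constructor
  · intro h
    have := congrArg QuaternionAlgebra.re h
    simp only [Quaternion.re_star, Quaternion.re_neg] at this
    linarith
  · intro h
    ext <;> simp [h]

section Automorphism

variable (φ : Octo ≃ₗ[ℝ] Octo) (h1 : φ oone = oone)
  (hmul : ∀ x y : Octo, φ (omul x y) = omul (φ x) (φ y))
include h1 hmul

lemma smul_apply_eq_smul_oone (x : Octo) :
    (2 * (ore (φ x) - ore x)) • φ x = (oinner (φ x) (φ x) - oinner x x) • oone := by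
  have h := omul_self (φ x)
  rw [← hmul, omul_self x, map_sub, map_smul, map_smul, h1] at h
  rw [mul_sub, sub_smul, sub_smul]
  linear_combination (norm := module) -h

lemma ore_apply (x : Octo) : ore (φ x) = ore x := by
  set t := 2 * (ore (φ x) - ore x)
  set s := oinner (φ x) (φ x) - oinner x x
  have h : t • φ x = s • oone := smul_apply_eq_smul_oone φ h1 hmul x
  have hx : t • x = t • φ x := by
    have : φ (t • x) = φ (s • oone) := by rw [map_smul, h, map_smul, h1]
    rw [φ.injective this, h]
  rcases smul_eq_zero.mp (smul_sub t x (φ x) ▸ sub_eq_zero.mpr hx) with ht | hφ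
  · linarith
  · exact congrArg ore (sub_eq_zero.mp hφ).symm

lemma oinner_apply_self (x : Octo) : oinner (φ x) (φ x) = oinner x x := by
  have h := smul_apply_eq_smul_oone φ h1 hmul x
  rw [ore_apply φ h1 hmul, sub_self, mul_zero, zero_smul, eq_comm, smul_eq_zero] at h
  have hone : oone ≠ 0 := by simp [oone, Prod.ext_iff]
  linarith [h.resolve_right hone]

lemma oinner_apply (x y : Octo) : oinner (φ x) (φ y) = oinner x y := by
  have h := oinner_add_add_self (φ x) (φ y)
  rw [← map_add, oinner_apply_self φ h1 hmul, oinner_apply_self φ h1 hmul,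
    oinner_apply_self φ h1 hmul, oinner_add_add_self] at h
  linarith

lemma isIm_apply {x : Octo} (hx : IsIm x) : IsIm (φ x) := by
  rw [isIm_iff_ore_eq_zero] at hx ⊢
  rwa [ore_apply φ h1 hmul]

lemma lam_apply (a b c : Octo) : lam (φ a) (φ b) (φ c) = lam a b c := by
  rw [lam, lam, comm, comm, ← hmul, ← hmul, ← map_sub, oinner_apply φ h1 hmul]

end Automorphism

end Octo

open Octo in
/-- Any `ℝ`-algebra automorphism of the octonions preserves the inner product, the imaginary
subspace, and the 3-form `λ(a,b,c) = ([a,b],c)`. -/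
theorem automorphism_preserves_structures (φ : Octo ≃ₗ[ℝ] Octo)
    (h1 : φ oone = oone) (hmul : ∀ x y : Octo, φ (omul x y) = omul (φ x) (φ y)) :
    (∀ x y : Octo, oinner (φ x) (φ y) = oinner x y) ∧
    (∀ x : Octo, IsIm x → IsIm (φ x)) ∧
    (∀ a b c : Octo, IsIm a → IsIm b → IsIm c → lam (φ a) (φ b) (φ c) = lam a b c) :=
  ⟨oinner_apply φ h1 hmul, fun _ => isIm_apply φ h1 hmul,
    fun a b c _ _ _ => lam_apply φ h1 hmul a b c⟩

end
end
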